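/- arXiv:2410.01025 — 4 statements merged into one kernel-verified Lean document; each statement's English description precedes it below -/
import Mathlib

section
/- For every integer k ≥ 1, all reals α_1,…,α_k > 0 and every s > 0, ∫_{(0,∞)^k} 1[ t_1 + ⋯ + t_k < s ] · t_1^{α_1−1} ⋯ t_k^{α_k−1} dt_1 ⋯ dt_k = s^{α_1+⋯+α_k} · ( Γ(α_1) ⋯ Γ(α_k) / Γ(α_1+⋯+α_k) ) · 1/(α_1+⋯+α_k). -/
open MeasureTheory Real Set
open scoped BigOperators

theorem betaIntble {a c s : ℝ} (ha : 0 < a) (hc : 0 ≤ c) (hs : 0 < s) :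
    IntegrableOn (fun x => x ^ (a - 1) * (s - x) ^ c) (Set.Ioo 0 s) := by
  have h1 : IntervalIntegrable (fun x => x ^ (a - 1) * (s - x) ^ c) volume 0 s := by
    apply IntervalIntegrable.mul_continuousOn
    · exact intervalIntegral.intervalIntegrable_rpow' (by linarith)
    · exact (continuous_const.sub continuous_id).continuousOn.rpow_const
        (fun x _ => Or.inr hc)
  rw [intervalIntegrable_iff_integrableOn_Ioc_of_le hs.le] at h1
  exact h1.mono_set Set.Ioo_subset_Ioc_self

theorem betaVal {a b s : ℝ} (ha : 0 < a) (hb : 0 < b) (hs : 0 < s) :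
    ∫ x in (0:ℝ)..s, x ^ (a - 1) * (s - x) ^ (b - 1)
      = s ^ (a + b - 1) * (Gamma a * Gamma b / Gamma (a + b)) := by
  have key := Complex.betaIntegral_scaled (a : ℂ) (b : ℂ) hs
  have hbeta : Complex.betaIntegral a b
      = Complex.Gamma a * Complex.Gamma b / Complex.Gamma (a + b) := by
    have h := Complex.Gamma_mul_Gamma_eq_betaIntegral
      (s := (a : ℂ)) (t := (b : ℂ)) (by simpa using ha) (by simpa using hb)
    have hne : Complex.Gamma ((a : ℂ) + b) ≠ 0 := by
      rw [← Complex.ofReal_add, Complex.Gamma_ofReal]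
      exact_mod_cast (Real.Gamma_pos_of_pos (by linarith)).ne'
    rw [eq_div_iff hne]
    linear_combination -h
  have heq : (∫ x in (0:ℝ)..s, ((x:ℂ) ^ ((a:ℂ) - 1) * ((s:ℂ) - x) ^ ((b:ℂ) - 1)))
      = ((∫ x in (0:ℝ)..s, x ^ (a - 1) * (s - x) ^ (b - 1) : ℝ) : ℂ) := by
    rw [← intervalIntegral.integral_ofReal]
    apply intervalIntegral.integral_congr
    intro x hx
    rw [Set.uIcc_of_le hs.le] at hx
    simp only
    rw [Complex.ofReal_mul, Complex.ofReal_cpow hx.1,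
      Complex.ofReal_cpow (by linarith [hx.2] : (0:ℝ) ≤ s - x)]
    push_cast
    ring
  rw [heq, hbeta] at key
  apply Complex.ofReal_injective
  rw [key]
  rw [Complex.ofReal_mul, Complex.ofReal_cpow hs.le]
  push_cast [← Complex.Gamma_ofReal]
  ring

theorem dirich (k : ℕ) : ∀ (α : Fin (k+1) → ℝ), (∀ i, 0 < α i) → ∀ s : ℝ, 0 < s →
    IntegrableOn (fun t => ∏ i, (t i) ^ (α i - 1))
      {t : Fin (k+1) → ℝ | (∀ i, 0 < t i) ∧ ∑ i, t i < s} volume ∧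
    (∫ t in {t : Fin (k+1) → ℝ | (∀ i, 0 < t i) ∧ ∑ i, t i < s}, ∏ i, (t i) ^ (α i - 1))
      = s ^ (∑ i, α i) * (∏ i, Real.Gamma (α i)) / Real.Gamma ((∑ i, α i) + 1) := by
  induction k with
  | zero =>
    intro α hα s hs
    set e := MeasurableEquiv.funUnique (Fin 1) ℝ with he
    have hmp : MeasurePreserving e volume volume := volume_preserving_funUnique (Fin 1) ℝ
    have hset : {t : Fin 1 → ℝ | (∀ i, 0 < t i) ∧ ∑ i, t i < s} = e ⁻¹' (Set.Ioo 0 s) := by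
      ext t
      simp [he, MeasurableEquiv.funUnique, Fin.forall_fin_one, Fin.sum_univ_one]
    have hfun : (fun t : Fin 1 → ℝ => ∏ i, (t i) ^ (α i - 1))
        = (fun x : ℝ => x ^ (α 0 - 1)) ∘ e := by
      funext t
      simp [he, MeasurableEquiv.funUnique, Fin.prod_univ_one]
    have hIoo : IntegrableOn (fun x : ℝ => x ^ (α 0 - 1)) (Set.Ioo 0 s) := by
      have h1 : IntervalIntegrable (fun x : ℝ => x ^ (α 0 - 1)) volume 0 s :=
        intervalIntegral.intervalIntegrable_rpow' (by linarith [hα 0])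
      rw [intervalIntegrable_iff_integrableOn_Ioc_of_le hs.le] at h1
      exact h1.mono_set Set.Ioo_subset_Ioc_self
    constructor
    · rw [hset, hfun]
      exact (hmp.integrableOn_comp_preimage e.measurableEmbedding).mpr hIoo
    · rw [hset, hfun]
      rw [show ((fun x : ℝ => x ^ (α 0 - 1)) ∘ e) = fun t => (fun x : ℝ => x ^ (α 0 - 1)) (e t)
          from rfl]
      rw [hmp.setIntegral_preimage_emb e.measurableEmbedding
        (fun x : ℝ => x ^ (α 0 - 1)) (Set.Ioo 0 s)]
      rw [← MeasureTheory.integral_Ioc_eq_integral_Ioo,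
        ← intervalIntegral.integral_of_le hs.le]
      rw [integral_rpow (Or.inl (by linarith [hα 0]))]
      have h0 : α 0 ≠ 0 := (hα 0).ne'
      rw [Fin.sum_univ_one, Fin.prod_univ_one, Real.Gamma_add_one h0]
      rw [Real.zero_rpow (by simpa using h0), sub_add_cancel]
      have hΓ : Real.Gamma (α 0) ≠ 0 := (Real.Gamma_pos_of_pos (hα 0)).ne'
      field_simp
      ring
  | succ k ih =>
    intro α hα s hs
    set a := α 0 with ha_def
    set A : ℝ := ∑ j : Fin (k+1), α j.succ with hA_def
    have ha : 0 < a := hα 0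
    have hA : 0 < A := Finset.sum_pos (fun j _ => hα j.succ) Finset.univ_nonempty
    set g : (Fin (k+1) → ℝ) → ℝ := fun y => ∏ j, (y j) ^ (α j.succ - 1) with hg_def
    set P : ℝ := ∏ j : Fin (k+1), Real.Gamma (α j.succ) with hP_def
    have hΓA1 : (0:ℝ) < Real.Gamma (A + 1) := Real.Gamma_pos_of_pos (by linarith)
    -- induction hypothesis specialized
    have IH := fun (r : ℝ) (hr : 0 < r) => ih (fun j => α j.succ) (fun j => hα j.succ) r hr
    set S' : ℝ → Set (Fin (k+1) → ℝ) :=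
      fun r => {y | (∀ j, 0 < y j) ∧ ∑ j, y j < r} with hS'_def
    have hsum_meas : Measurable fun y : Fin (k+1) → ℝ => ∑ j, y j :=
      Finset.measurable_sum _ fun j _ => measurable_pi_apply j
    have hS'meas : ∀ r, MeasurableSet (S' r) := by
      intro r
      have hrw : S' r = (⋂ j, {y : Fin (k+1) → ℝ | 0 < y j}) ∩
          {y : Fin (k+1) → ℝ | ∑ j, y j < r} := by
        ext y
        simp [hS'_def, Set.mem_iInter]
      rw [hrw]
      exact (MeasurableSet.iInter fun j =>
        measurableSet_lt measurable_const (measurable_pi_apply j)).inter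
        (measurableSet_lt hsum_meas measurable_const)
    set T : Set (ℝ × (Fin (k+1) → ℝ)) :=
      {p | (0 < p.1 ∧ p.1 < s) ∧ (∀ j, 0 < p.2 j) ∧ ∑ j, p.2 j < s - p.1} with hT_def
    set G : ℝ × (Fin (k+1) → ℝ) → ℝ :=
      fun p => p.1 ^ (a - 1) * g p.2 with hG_def
    have hTmeas : MeasurableSet T := by
      have hrw : T = ({p : ℝ × (Fin (k+1) → ℝ) | 0 < p.1} ∩ {p | p.1 < s}) ∩
          ((⋂ j, {p : ℝ × (Fin (k+1) → ℝ) | 0 < p.2 j}) ∩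
            {p : ℝ × (Fin (k+1) → ℝ) | ∑ j, p.2 j < s - p.1}) := by
        ext p
        simp only [hT_def, Set.mem_setOf_eq, Set.mem_inter_iff, Set.mem_iInter]
      rw [hrw]
      refine MeasurableSet.inter (MeasurableSet.inter ?_ ?_) (MeasurableSet.inter ?_ ?_)
      · exact measurableSet_lt measurable_const measurable_fst
      · exact measurableSet_lt measurable_fst measurable_const
      · exact MeasurableSet.iInter fun j =>
          measurableSet_lt measurable_const (by fun_prop)
      · exact measurableSet_lt (by fun_prop) (by fun_prop)
    have hGmeas : Measurable G := by fun_prop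
    set e := MeasurableEquiv.piFinSuccAbove (fun _ : Fin (k+2) => ℝ) 0 with he_def
    have hmp : MeasurePreserving e volume volume :=
      volume_preserving_piFinSuccAbove (fun _ : Fin (k+2) => ℝ) 0
    have heval : ∀ t : Fin (k+2) → ℝ, e t = (t 0, fun j => t j.succ) := by
      intro t
      simp only [he_def, MeasurableEquiv.piFinSuccAbove_apply, Fin.insertNthEquiv,
        Equiv.coe_fn_symm_mk]
      exact Prod.ext rfl (by rw [Fin.removeNth_zero]; rfl)
    have hset : {t : Fin (k+2) → ℝ | (∀ i, 0 < t i) ∧ ∑ i, t i < s} = e ⁻¹' T := by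
      ext t
      simp only [Set.mem_setOf_eq, Set.mem_preimage, heval, hT_def]
      rw [Fin.forall_fin_succ, Fin.sum_univ_succ]
      constructor
      · rintro ⟨⟨h0, hsucc⟩, hsum⟩
        have hnn : (0:ℝ) ≤ ∑ j : Fin (k+1), t j.succ :=
          Finset.sum_nonneg fun j _ => (hsucc j).le
        exact ⟨⟨h0, by linarith⟩, hsucc, by linarith⟩
      · rintro ⟨⟨h0, _⟩, hsucc, hsum⟩
        exact ⟨⟨h0, hsucc⟩, by linarith⟩
    have hfun : (fun t : Fin (k+2) → ℝ => ∏ i, (t i) ^ (α i - 1)) = G ∘ e := by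
      funext t
      simp only [Function.comp_apply, heval, hG_def, hg_def]
      rw [Fin.prod_univ_succ]
    -- nonnegativity of the indicator
    have hnn : ∀ p, 0 ≤ T.indicator G p := by
      intro p
      apply Set.indicator_nonneg
      rintro p ⟨⟨h1, _⟩, h2, _⟩
      apply mul_nonneg (Real.rpow_nonneg h1.le _)
      exact Finset.prod_nonneg fun j _ => Real.rpow_nonneg (h2 j).le _
    -- slices
    have hslice : ∀ x : ℝ, (fun y => T.indicator G (x, y))
        = Set.indicator (Set.Ioo 0 s) (fun x' => x' ^ (a - 1)) x
            • (S' (s - x)).indicator g := by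
      intro x
      funext y
      have hmemT : ((x, y) ∈ T) ↔ (x ∈ Set.Ioo 0 s ∧ y ∈ S' (s - x)) := Iff.rfl
      simp only [Pi.smul_apply, smul_eq_mul, Set.indicator_apply, hmemT]
      by_cases hx : x ∈ Set.Ioo 0 s <;> by_cases hy : y ∈ S' (s - x) <;>
        simp [hx, hy, hG_def]
    have hInner : ∀ x : ℝ, Integrable (fun y => T.indicator G (x, y)) volume := by
      intro x
      rw [hslice x]
      apply Integrable.smul
      by_cases hr : 0 < s - x
      · rw [integrable_indicator_iff (hS'meas (s - x))]
        exact (IH (s - x) hr).1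
      · have hemp : S' (s - x) = ∅ := by
          rw [Set.eq_empty_iff_forall_notMem]
          rintro y ⟨h1, h2⟩
          have : (0:ℝ) < ∑ j, y j := Finset.sum_pos (fun j _ => h1 j) Finset.univ_nonempty
          linarith
        rw [hemp]
        simp only [Set.indicator_empty]
        exact integrable_zero _ _ _
    -- the marginal
    have hinner_val : ∀ x : ℝ, (∫ y, T.indicator G (x, y))
        = Set.indicator (Set.Ioo 0 s)
            (fun x' => x' ^ (a - 1) * ((s - x') ^ A * P / Real.Gamma (A + 1))) x := by
      intro x
      rw [hslice x]
      by_cases hx : x ∈ Set.Ioo 0 s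
      · rw [Set.indicator_of_mem hx, Set.indicator_of_mem hx]
        rw [show ((x:ℝ) ^ (a-1) • (S' (s-x)).indicator g)
            = fun y => x ^ (a-1) * (S' (s-x)).indicator g y from rfl]
        rw [integral_const_mul, integral_indicator (hS'meas (s - x))]
        rw [(IH (s - x) (by simpa using sub_pos.mpr hx.2)).2]
      · rw [Set.indicator_of_notMem hx, Set.indicator_of_notMem hx, zero_smul]
        exact integral_zero _ _
    have hMargInt : Integrable (Set.indicator (Set.Ioo 0 s)
        (fun x' => x' ^ (a - 1) * ((s - x') ^ A * P / Real.Gamma (A + 1)))) volume := by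
      rw [integrable_indicator_iff measurableSet_Ioo]
      have : (fun x' : ℝ => x' ^ (a - 1) * ((s - x') ^ A * P / Real.Gamma (A + 1)))
          = fun x' : ℝ => (x' ^ (a - 1) * (s - x') ^ A) * (P / Real.Gamma (A + 1)) := by
        funext x'; ring
      rw [this]
      exact (betaIntble ha hA.le hs).mul_const _
    -- integrability of the indicator on the product
    have hIndInt : Integrable (T.indicator G) (volume.prod volume) := by
      refine (integrable_prod_iff ?_).mpr ⟨ae_of_all _ hInner, ?_⟩
      · exact (hGmeas.indicator hTmeas).aestronglyMeasurable
      · have : (fun x => ∫ y, ‖T.indicator G (x, y)‖)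
            = fun x => ∫ y, T.indicator G (x, y) := by
          funext x
          exact integral_congr_ae (ae_of_all _ fun y => Real.norm_of_nonneg (hnn (x, y)))
        rw [this]
        simp only [hinner_val]
        exact hMargInt
    have hvolprod : (volume : Measure (ℝ × (Fin (k+1) → ℝ))) = volume.prod volume :=
      MeasureTheory.Measure.volume_eq_prod _ _
    constructor
    · rw [hset, hfun]
      apply (hmp.integrableOn_comp_preimage e.measurableEmbedding).mpr
      have : IntegrableOn G T (volume.prod volume) :=
        (integrable_indicator_iff hTmeas).mp hIndInt
      rwa [IntegrableOn, ← hvolprod] at this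
    · rw [hset, hfun]
      rw [show (G ∘ e) = fun t => G (e t) from rfl]
      rw [hmp.setIntegral_preimage_emb e.measurableEmbedding G T]
      rw [← integral_indicator hTmeas, hvolprod, integral_prod _ hIndInt]
      simp only [hinner_val]
      rw [integral_indicator measurableSet_Ioo]
      have hsplit : (fun x' : ℝ => x' ^ (a - 1) * ((s - x') ^ A * P / Real.Gamma (A + 1)))
          = fun x' : ℝ => (x' ^ (a - 1) * (s - x') ^ ((A + 1) - 1)) * (P / Real.Gamma (A + 1)) := by
        funext x'
        rw [add_sub_cancel_right]
        ring
      rw [MeasureTheory.setIntegral_congr_fun measurableSet_Ioo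
        (fun x _ => congrFun hsplit x)]
      rw [integral_mul_const, ← MeasureTheory.integral_Ioc_eq_integral_Ioo,
        ← intervalIntegral.integral_of_le hs.le]
      rw [betaVal ha (by linarith : (0:ℝ) < A + 1) hs]
      have hsum : (∑ i : Fin (k+2), α i) = a + A := by
        rw [Fin.sum_univ_succ]
      have hprod : (∏ i : Fin (k+2), Real.Gamma (α i)) = Real.Gamma a * P := by
        rw [Fin.prod_univ_succ]
      rw [hsum, hprod]
      rw [show a + (A + 1) - 1 = a + A by ring, show a + (A + 1) = (a + A) + 1 by ring]
      field_simp

/-- Multiple Dirichlet integrals of type 1 (Lemma 3.1, identity). -/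
theorem statement9 (k : ℕ) (hk : 1 ≤ k) (α : Fin k → ℝ) (hα : ∀ i, 0 < α i)
    (s : ℝ) (hs : 0 < s) :
    (∫ t in {t : Fin k → ℝ | (∀ i, 0 < t i) ∧ ∑ i, t i < s},
        ∏ i, (t i) ^ (α i - 1)) =
      s ^ (∑ i, α i) * ((∏ i, Real.Gamma (α i)) / Real.Gamma (∑ i, α i)) *
        (∑ i, α i)⁻¹ := by
  obtain ⟨m, rfl⟩ : ∃ m, k = m + 1 := ⟨k - 1, (Nat.succ_pred_eq_of_pos hk).symm⟩
  rw [(dirich m α hα s hs).2]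
  have hA : 0 < ∑ i, α i := Finset.sum_pos (fun i _ => hα i) Finset.univ_nonempty
  rw [Real.Gamma_add_one hA.ne']
  have hΓ : Real.Gamma (∑ i, α i) ≠ 0 := (Real.Gamma_pos_of_pos hA).ne'
  simp only [div_eq_mul_inv, mul_inv]
  ring
end

section
/- For every α > 0 there exists C = C(α) > 0 such that for all integers k ≥ 1 and 0 ≤ k₀ ≤ k, and all s > 0, setting A = α k₀ + (k − k₀): ∫_{(0,∞)^k} 1[ t_1 + ⋯ + t_k < s ] · ∏_{i=1}^{k₀} t_i^{α−1} dt_1 ⋯ dt_k ≤ (s/A)^A · e^k · C^{k₀}. -/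
open MeasureTheory Real
open scoped BigOperators

/-!
Exponential tilting: on the simplex `∑ tᵢ < s` one has `1 ≤ exp (λ (s - ∑ tᵢ))`, which turns the
integral into a product of one-dimensional Gamma integrals, `exp (λ s) ∏ Γ(aᵢ) λ^{-aᵢ}`.
The choice `λ = A / s` with `A = ∑ aᵢ` optimises this and gives `(s / A)^A e^A ∏ Γ(aᵢ)`; for
`aᵢ ∈ {α, 1}` this is the claim with `C = Γ(α) e^{α - 1}`.
-/

section Dirichlet

variable {ι : Type*} [Fintype ι]

lemma integrable_indicator_Ioi_rpow_mul_exp_neg_mul {a l : ℝ} (ha : 0 < a) (hl : 0 < l) :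
    Integrable ((Set.Ioi 0).indicator fun x : ℝ => x ^ (a - 1) * exp (-(l * x))) := by
  have h := integrableOn_rpow_mul_exp_neg_mul_rpow (s := a - 1) (p := 1) (by linarith) one_pos hl
  simp only [rpow_one, neg_mul] at h
  exact h.integrable_indicator measurableSet_Ioi

lemma integral_indicator_Ioi_rpow_mul_exp_neg_mul {a l : ℝ} (ha : 0 < a) (hl : 0 < l) :
    ∫ x, (Set.Ioi 0).indicator (fun x : ℝ => x ^ (a - 1) * exp (-(l * x))) x =
      (1 / l) ^ a * Gamma a := by
  rw [integral_indicator measurableSet_Ioi]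
  exact integral_rpow_mul_exp_neg_mul_Ioi ha hl

lemma measurableSet_simplex (s : ℝ) :
    MeasurableSet {t : ι → ℝ | (∀ i, 0 < t i) ∧ ∑ i, t i < s} := by
  measurability

lemma indicator_simplex_prod_rpow_le (a : ι → ℝ) {s l : ℝ} (hl : 0 ≤ l) (t : ι → ℝ) :
    {t : ι → ℝ | (∀ i, 0 < t i) ∧ ∑ i, t i < s}.indicator (fun t => ∏ i, t i ^ (a i - 1)) t ≤
      exp (l * s) * ∏ i, (Set.Ioi 0).indicator (fun x => x ^ (a i - 1) * exp (-(l * x))) (t i) := by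
  by_cases ht : t ∈ {t : ι → ℝ | (∀ i, 0 < t i) ∧ ∑ i, t i < s}
  · rw [Set.indicator_of_mem ht]
    obtain ⟨htpos, htsum⟩ := ht
    have hprod_nonneg : 0 ≤ ∏ i, t i ^ (a i - 1) :=
      Finset.prod_nonneg fun i _ => rpow_nonneg (htpos i).le _
    have htilt : 1 ≤ exp (l * (s - ∑ i, t i)) :=
      one_le_exp (mul_nonneg hl (by linarith))
    calc ∏ i, t i ^ (a i - 1)
        ≤ exp (l * (s - ∑ i, t i)) * ∏ i, t i ^ (a i - 1) := le_mul_of_one_le_left hprod_nonneg htilt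
      _ = exp (l * s) * ∏ i, (t i ^ (a i - 1) * exp (-(l * t i))) := by
        rw [Finset.prod_mul_distrib, ← exp_sum, Finset.sum_neg_distrib, ← Finset.mul_sum,
          mul_sub, sub_eq_add_neg, exp_add]
        ring
      _ = _ := by
        simp only [Set.indicator_of_mem (Set.mem_Ioi.2 (htpos _))]
  · rw [Set.indicator_of_notMem ht]
    exact mul_nonneg (exp_nonneg _) <| Finset.prod_nonneg fun i _ =>
      Set.indicator_nonneg (fun x hx => mul_nonneg (rpow_nonneg (le_of_lt hx) _) (exp_nonneg _)) _

theorem integral_simplex_prod_rpow_le_exp_mul_prod {a : ι → ℝ} (ha : ∀ i, 0 < a i) (s : ℝ)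
    {l : ℝ} (hl : 0 < l) :
    ∫ t in {t : ι → ℝ | (∀ i, 0 < t i) ∧ ∑ i, t i < s}, ∏ i, t i ^ (a i - 1) ≤
      exp (l * s) * ∏ i, (1 / l) ^ a i * Gamma (a i) := by
  rw [← integral_indicator (measurableSet_simplex s)]
  calc _ ≤ ∫ t : ι → ℝ,
          exp (l * s) * ∏ i, (Set.Ioi 0).indicator (fun x => x ^ (a i - 1) * exp (-(l * x))) (t i) :=
        integral_mono_of_nonneg
          (Filter.Eventually.of_forall fun t => Set.indicator_nonneg
            (fun t ht => Finset.prod_nonneg fun i _ => rpow_nonneg (ht.1 i).le _) t)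
          ((Integrable.fintype_prod fun i =>
            integrable_indicator_Ioi_rpow_mul_exp_neg_mul (ha i) hl).const_mul _)
          (Filter.Eventually.of_forall (indicator_simplex_prod_rpow_le a hl.le))
    _ = exp (l * s) * ∏ i, (1 / l) ^ a i * Gamma (a i) := by
      rw [integral_const_mul, integral_fintype_prod_volume_eq_prod]
      simp only [integral_indicator_Ioi_rpow_mul_exp_neg_mul (ha _) hl]

theorem integral_simplex_prod_rpow_le [Nonempty ι] {a : ι → ℝ} (ha : ∀ i, 0 < a i) {s : ℝ}
    (hs : 0 < s) :
    ∫ t in {t : ι → ℝ | (∀ i, 0 < t i) ∧ ∑ i, t i < s}, ∏ i, t i ^ (a i - 1) ≤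
      (s / ∑ i, a i) ^ (∑ i, a i) * exp (∑ i, a i) * ∏ i, Gamma (a i) := by
  set A := ∑ i, a i
  have hA : 0 < A := Finset.sum_pos (fun i _ => ha i) Finset.univ_nonempty
  calc _ ≤ exp (A / s * s) * ∏ i, (1 / (A / s)) ^ a i * Gamma (a i) :=
        integral_simplex_prod_rpow_le_exp_mul_prod ha s (div_pos hA hs)
    _ = (s / A) ^ A * exp A * ∏ i, Gamma (a i) := by
      rw [div_mul_cancel₀ A hs.ne', Finset.prod_mul_distrib, one_div_div,
        ← rpow_sum_of_pos (div_pos hs hA)]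
      ring

end Dirichlet

lemma Fin.card_filter_not_val_lt {n m : ℕ} (h : m ≤ n) :
    (Finset.univ.filter (fun i : Fin n => ¬ (i : ℕ) < m)).card = n - m := by
  rw [Finset.filter_not, Finset.card_sdiff_of_subset (Finset.filter_subset _ _),
    Fin.card_filter_val_lt, min_eq_right h, Finset.card_univ, Fintype.card_fin]

/-- Dirichlet integral estimate (Lemma 3.1, estimate). -/
theorem statement10 (α : ℝ) (hα : 0 < α) :
    ∃ C : ℝ, 0 < C ∧
      ∀ k k₀ : ℕ, 1 ≤ k → k₀ ≤ k → ∀ s : ℝ, 0 < s →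
        (∫ t in {t : Fin k → ℝ | (∀ i, 0 < t i) ∧ ∑ i, t i < s},
            ∏ i ∈ Finset.univ.filter (fun i : Fin k => (i : ℕ) < k₀),
              (t i) ^ (α - 1)) ≤
          (s / (α * k₀ + ((k : ℝ) - k₀))) ^ (α * k₀ + ((k : ℝ) - k₀)) *
            Real.exp k * C ^ k₀ := by
  refine ⟨Gamma α * exp (α - 1), by positivity [Gamma_pos_of_pos hα], ?_⟩
  intro k k₀ hk hk₀ s hs
  have : Nonempty (Fin k) := ⟨⟨0, hk⟩⟩
  set a : Fin k → ℝ := fun i => if (i : ℕ) < k₀ then α else 1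
  have hcard : (Finset.univ.filter (fun i : Fin k => (i : ℕ) < k₀)).card = k₀ := by
    rw [Fin.card_filter_val_lt, min_eq_right hk₀]
  have hintegrand (t : Fin k → ℝ) : ∏ i, t i ^ (a i - 1) =
      ∏ i ∈ Finset.univ.filter (fun i : Fin k => (i : ℕ) < k₀), t i ^ (α - 1) := by
    rw [Finset.prod_filter]
    exact Finset.prod_congr rfl fun i _ => by split_ifs <;> simp [a, *]
  have hsum : ∑ i, a i = α * k₀ + ((k : ℝ) - k₀) := by
    rw [Finset.sum_ite, Finset.sum_const, Finset.sum_const, hcard, Fin.card_filter_not_val_lt hk₀, nsmul_eq_mul,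
      nsmul_eq_mul, Nat.cast_sub hk₀]
    ring
  have hGamma : ∏ i, Gamma (a i) = Gamma α ^ k₀ := by
    rw [Finset.prod_apply_ite, Finset.prod_const, Finset.prod_const, hcard, Gamma_one, one_pow,
      mul_one]
  calc _ = ∫ t in {t : Fin k → ℝ | (∀ i, 0 < t i) ∧ ∑ i, t i < s}, ∏ i, t i ^ (a i - 1) := by
        simp only [hintegrand]
    _ ≤ (s / ∑ i, a i) ^ (∑ i, a i) * exp (∑ i, a i) * ∏ i, Gamma (a i) :=
        integral_simplex_prod_rpow_le (fun i => by dsimp only [a]; split_ifs <;> positivity) hs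
    _ = _ := by
      rw [hsum, hGamma, show α * k₀ + ((k : ℝ) - k₀) = k + k₀ * (α - 1) by ring, exp_add,
        exp_nat_mul]
      ring
end

section
/- There exists a universal constant C > 0 such that for every δ ∈ {1,2}, every integer p ≥ 1 and every real s ≥ e·p: log ∫_{(0,∞)^p} 1[ t_1 + ⋯ + t_p < s ] · ∏_{i=1}^p ( 1 + |log t_i| )^δ dt_1 ⋯ dt_p ≤ p log( (s/p) · ( log(s/p) )^δ ) + C p. -/
/-!
Put `a = s / p ≥ e`. On the region of integration `∑ (1 - tᵢ / a) ≥ 0`, so the integrand may be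
multiplied by `exp (∑ (1 - tᵢ / a)) ≥ 1`; the result is a product of one-variable functions, and
enlarging the region to the whole orthant bounds the integral by
`(∫₀^∞ (1 + |log t|)^δ e^{1 - t/a} dt)^p`. With `t = a u`, since `log a ≥ 1` we have
`1 + |log t| ≤ log a · (2 + |log u|)`, and `(2 + |log u|)² ≤ 8 e^{|log u|/2} ≤ 8 (u^{-1/2} + u^{1/2})`,
so the one-variable integral is at most `8 e (Γ(1/2) + Γ(3/2)) · a (log a)^δ`.
-/

open MeasureTheory Real Set
open scoped BigOperators

theorem integrableOn_univ_pi_prod {ι α : Type*} [Fintype ι] [MeasurableSpace α] {μ : Measure α}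
    [SigmaFinite μ] {A : Set α} {f : α → ℝ} (hf : IntegrableOn f A μ) :
    IntegrableOn (fun x : ι → α ↦ ∏ i, f (x i)) (univ.pi fun _ ↦ A) (Measure.pi fun _ ↦ μ) := by
  rw [IntegrableOn, Measure.restrict_pi_pi]
  exact Integrable.fintype_prod fun _ ↦ hf

theorem setIntegral_prod_le_pow {ι α : Type*} [Fintype ι] [MeasurableSpace α] {μ : Measure α}
    [SigmaFinite μ] {A : Set α} (hA : MeasurableSet A) {f : α → ℝ} (hf : ∀ x ∈ A, 0 ≤ f x)
    (hfi : IntegrableOn f A μ) {S : Set (ι → α)} (hS : S ⊆ univ.pi fun _ ↦ A) :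
    ∫ x in S, ∏ i, f (x i) ∂(Measure.pi fun _ ↦ μ) ≤ (∫ x in A, f x ∂μ) ^ Fintype.card ι := by
  have hprod_nonneg : 0 ≤ᵐ[(Measure.pi fun _ ↦ μ).restrict (univ.pi fun _ ↦ A)]
      fun x : ι → α ↦ ∏ i, f (x i) := by
    rw [Filter.EventuallyLE, ae_restrict_iff' (MeasurableSet.univ_pi fun _ ↦ hA)]
    exact Filter.Eventually.of_forall fun x hx ↦
      Finset.prod_nonneg fun i _ ↦ hf _ (hx i (mem_univ i))
  calc ∫ x in S, ∏ i, f (x i) ∂(Measure.pi fun _ ↦ μ)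
      ≤ ∫ x in univ.pi fun _ ↦ A, ∏ i, f (x i) ∂(Measure.pi fun _ ↦ μ) :=
        setIntegral_mono_set (integrableOn_univ_pi_prod hfi) hprod_nonneg
          (Filter.Eventually.of_forall hS)
    _ = (∫ x in A, f x ∂μ) ^ Fintype.card ι := by
        rw [Measure.restrict_pi_pi, integral_fintype_prod_eq_pow]

theorem sq_two_add_le_exp {v : ℝ} (hv : 0 ≤ v) : (2 + v) ^ 2 ≤ 8 * exp (v / 2) := by
  have hexp : exp (v / 2) = exp (v / 8) ^ 4 := by
    rw [← exp_nat_mul]; ring_nf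
  have hquartic : (1 + v / 8) ^ 4 ≤ exp (v / 8) ^ 4 := by
    gcongr
    linarith [add_one_le_exp (v / 8)]
  rw [hexp]
  nlinarith [sq_nonneg (v - 4), pow_nonneg hv 3, pow_nonneg hv 4]

theorem exp_half_abs_log_le {u : ℝ} (hu : 0 < u) :
    exp (|log u| / 2) ≤ u ^ ((1 : ℝ) / 2 - 1) + u ^ ((3 : ℝ) / 2 - 1) := by
  rw [rpow_def_of_pos hu, rpow_def_of_pos hu]
  rcases abs_cases (log u) with ⟨h, -⟩ | ⟨h, -⟩ <;> rw [h]
  · have := exp_pos (log u * (1 / 2 - 1))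
    ring_nf at this ⊢; linarith
  · have := exp_pos (log u * (3 / 2 - 1))
    ring_nf at this ⊢; linarith

theorem one_add_abs_log_le {a t : ℝ} (ha : exp 1 ≤ a) (ht : 0 < t) :
    1 + |log t| ≤ log a * (2 + |log (a⁻¹ * t)|) := by
  have ha₀ : 0 < a := (exp_pos 1).trans_le ha
  have hloga : 1 ≤ log a := by rwa [le_log_iff_exp_le ha₀]
  have hlogt : log t = log a + log (a⁻¹ * t) := by
    rw [log_mul (inv_ne_zero ha₀.ne') ht.ne', log_inv]; ring
  have htriangle : |log t| ≤ log a + |log (a⁻¹ * t)| := by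
    simpa only [← hlogt, abs_of_pos (by linarith : 0 < log a)]
      using abs_add_le (log a) (log (a⁻¹ * t))
  nlinarith [abs_nonneg (log (a⁻¹ * t))]

noncomputable def gammaHalfSum (u : ℝ) : ℝ :=
  exp (-u) * u ^ ((1 : ℝ) / 2 - 1) + exp (-u) * u ^ ((3 : ℝ) / 2 - 1)

theorem integrableOn_gammaHalfSum : IntegrableOn gammaHalfSum (Ioi 0) :=
  (GammaIntegral_convergent (by norm_num)).add (GammaIntegral_convergent (by norm_num))

theorem integral_gammaHalfSum : ∫ u in Ioi 0, gammaHalfSum u = Gamma (1 / 2) + Gamma (3 / 2) := by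
  rw [Gamma_eq_integral (by norm_num), Gamma_eq_integral (by norm_num)]
  exact integral_add (GammaIntegral_convergent (by norm_num))
    (GammaIntegral_convergent (by norm_num))

noncomputable def logWeightConst : ℝ := 8 * exp 1 * (Gamma (1 / 2) + Gamma (3 / 2))

theorem one_lt_logWeightConst : 1 < logWeightConst := by
  have hGamma : 1 ≤ Gamma (1 / 2) := by
    rw [Gamma_one_half_eq, one_le_sqrt]
    linarith [pi_gt_three]
  have := Gamma_pos_of_pos (by norm_num : (0 : ℝ) < 3 / 2)
  have := add_one_le_exp (1 : ℝ)
  unfold logWeightConst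
  nlinarith

noncomputable def logWeight (δ : ℕ) (a t : ℝ) : ℝ := (1 + |log t|) ^ δ * exp (1 - t / a)

theorem logWeight_nonneg (δ : ℕ) (a t : ℝ) : 0 ≤ logWeight δ a t := by
  unfold logWeight; positivity

theorem logWeight_le {δ : ℕ} (hδ : δ ≤ 2) {a t : ℝ} (ha : exp 1 ≤ a) (ht : 0 < t) :
    logWeight δ a t ≤ 8 * exp 1 * log a ^ δ * gammaHalfSum (a⁻¹ * t) := by
  have ha₀ : 0 < a := (exp_pos 1).trans_le ha
  set u := a⁻¹ * t
  have hu : 0 < u := by positivity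
  have hloga : 0 ≤ log a := log_nonneg (le_trans (by linarith [add_one_le_exp (1 : ℝ)]) ha)
  have hv : 0 ≤ |log u| := abs_nonneg _
  have hpow :
      (1 + |log t|) ^ δ ≤ log a ^ δ * (8 * (u ^ ((1 : ℝ) / 2 - 1) + u ^ ((3 : ℝ) / 2 - 1))) :=
    calc (1 + |log t|) ^ δ ≤ (log a * (2 + |log u|)) ^ δ := by
          gcongr; exact one_add_abs_log_le ha ht
      _ ≤ log a ^ δ * (2 + |log u|) ^ 2 := by
          rw [mul_pow]; gcongr; linarith
      _ ≤ log a ^ δ * (8 * (u ^ ((1 : ℝ) / 2 - 1) + u ^ ((3 : ℝ) / 2 - 1))) := by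
          gcongr
          exact (sq_two_add_le_exp hv).trans (by gcongr; exact exp_half_abs_log_le hu)
  have hexp : exp (1 - t / a) = exp 1 * exp (-u) := by
    rw [← exp_add, div_eq_inv_mul, ← sub_eq_add_neg]
  calc logWeight δ a t
      ≤ log a ^ δ * (8 * (u ^ ((1 : ℝ) / 2 - 1) + u ^ ((3 : ℝ) / 2 - 1))) * exp (1 - t / a) := by
        unfold logWeight; gcongr
    _ = 8 * exp 1 * log a ^ δ * gammaHalfSum u := by
        rw [hexp, gammaHalfSum]; ring

theorem integrableOn_gammaHalfSum_comp_mul_left {c : ℝ} (hc : 0 < c) :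
    IntegrableOn (fun t ↦ gammaHalfSum (c * t)) (Ioi 0) :=
  (integrableOn_Ioi_comp_mul_left_iff gammaHalfSum 0 hc).2
    (by simpa using integrableOn_gammaHalfSum)

theorem integrableOn_logWeight {δ : ℕ} (hδ : δ ≤ 2) {a : ℝ} (ha : exp 1 ≤ a) :
    IntegrableOn (logWeight δ a) (Ioi 0) := by
  have ha₀ : 0 < a := (exp_pos 1).trans_le ha
  refine ((integrableOn_gammaHalfSum_comp_mul_left (inv_pos.2 ha₀)).const_mul
    (8 * exp 1 * log a ^ δ)).mono' (by unfold logWeight; fun_prop) ?_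
  filter_upwards [ae_restrict_mem measurableSet_Ioi] with t ht
  rw [norm_of_nonneg (logWeight_nonneg δ a t)]
  exact logWeight_le hδ ha ht

theorem integral_logWeight_le {δ : ℕ} (hδ : δ ≤ 2) {a : ℝ} (ha : exp 1 ≤ a) :
    ∫ t in Ioi 0, logWeight δ a t ≤ logWeightConst * (a * log a ^ δ) := by
  have ha₀ : 0 < a := (exp_pos 1).trans_le ha
  calc ∫ t in Ioi 0, logWeight δ a t
      ≤ ∫ t in Ioi 0, 8 * exp 1 * log a ^ δ * gammaHalfSum (a⁻¹ * t) :=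
        setIntegral_mono_on (integrableOn_logWeight hδ ha)
          ((integrableOn_gammaHalfSum_comp_mul_left (inv_pos.2 ha₀)).const_mul _)
          measurableSet_Ioi fun _ ht ↦ logWeight_le hδ ha ht
    _ = logWeightConst * (a * log a ^ δ) := by
        rw [integral_const_mul, integral_comp_mul_left_Ioi _ _ (inv_pos.2 ha₀), mul_zero,
          integral_gammaHalfSum, inv_inv, smul_eq_mul, logWeightConst]
        ring

theorem prod_le_prod_logWeight {ι : Type*} [Fintype ι] (δ : ℕ) {a : ℝ} (ha : 0 < a) {t : ι → ℝ}
    (ht : ∑ i, t i ≤ Fintype.card ι * a) :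
    ∏ i, (1 + |log (t i)|) ^ δ ≤ ∏ i, logWeight δ a (t i) := by
  have hsum : 0 ≤ ∑ i, (1 - t i / a) := by
    rw [Finset.sum_sub_distrib, ← Finset.sum_div, sub_nonneg, div_le_iff₀ ha]
    simpa using ht
  simp only [logWeight, Finset.prod_mul_distrib, ← exp_sum]
  exact le_mul_of_one_le_right (by positivity) (one_le_exp hsum)

theorem setIntegral_prod_le_logWeightConst_pow {ι : Type*} [Fintype ι] {δ : ℕ} (hδ : δ ≤ 2)
    {a : ℝ} (ha : exp 1 ≤ a) :
    ∫ t in {t : ι → ℝ | (∀ i, 0 < t i) ∧ ∑ i, t i < Fintype.card ι * a},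
        ∏ i, (1 + |log (t i)|) ^ δ ≤
      (logWeightConst * (a * log a ^ δ)) ^ Fintype.card ι := by
  have ha₀ : 0 < a := (exp_pos 1).trans_le ha
  set S := {t : ι → ℝ | (∀ i, 0 < t i) ∧ ∑ i, t i < Fintype.card ι * a}
  have hS : S ⊆ univ.pi fun _ ↦ Ioi 0 := fun t ht i _ ↦ ht.1 i
  calc ∫ t in S, ∏ i, (1 + |log (t i)|) ^ δ
      ≤ ∫ t in S, ∏ i, logWeight δ a (t i) := by
        refine integral_mono_of_nonneg (Filter.Eventually.of_forall fun t ↦ by positivity)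
          ((integrableOn_univ_pi_prod (integrableOn_logWeight hδ ha)).mono_set hS) ?_
        filter_upwards [ae_restrict_mem (by measurability)] with t ht
        exact prod_le_prod_logWeight δ ha₀ ht.2.le
    _ ≤ (∫ t in Ioi 0, logWeight δ a t) ^ Fintype.card ι := by
        simpa only [← volume_pi] using setIntegral_prod_le_pow measurableSet_Ioi
          (fun t _ ↦ logWeight_nonneg δ a t) (integrableOn_logWeight hδ ha) hS
    _ ≤ (logWeightConst * (a * log a ^ δ)) ^ Fintype.card ι := by
        gcongr
        · exact setIntegral_nonneg measurableSet_Ioi fun t _ ↦ logWeight_nonneg δ a t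
        · exact integral_logWeight_le hδ ha

theorem log_le_of_le_mul_pow {I K B : ℝ} {p : ℕ} (hI : 0 ≤ I) (hK : 1 ≤ K) (hB : 1 ≤ B)
    (h : I ≤ (K * B) ^ p) : log I ≤ p * log B + log K * p := by
  have hlogK := log_nonneg hK
  have hlogB := log_nonneg hB
  rcases hI.eq_or_lt with rfl | hI
  · rw [log_zero]; positivity
  · calc log I ≤ log ((K * B) ^ p) := log_le_log hI h
      _ = p * log B + log K * p := by
        rw [log_pow, log_mul (by positivity) (by positivity)]; ring

/-- Logarithmic Dirichlet integral estimate (Lemma 3.2, second estimate). -/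
theorem statement12 :
    ∃ C : ℝ, 0 < C ∧
      ∀ δ : ℕ, (δ = 1 ∨ δ = 2) → ∀ p : ℕ, 1 ≤ p → ∀ s : ℝ, Real.exp 1 * p ≤ s →
        Real.log (∫ t in {t : Fin p → ℝ | (∀ i, 0 < t i) ∧ ∑ i, t i < s},
            ∏ i, (1 + |Real.log (t i)|) ^ δ) ≤
          p * Real.log ((s / p) * (Real.log (s / p)) ^ δ) + C * p := by
  refine ⟨log logWeightConst, log_pos one_lt_logWeightConst, ?_⟩
  intro δ hδ p hp s hs
  have hp₀ : (0 : ℝ) < p := by exact_mod_cast hp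
  have ha : exp 1 ≤ s / p := (le_div_iff₀ hp₀).2 hs
  have hloga : 1 ≤ log (s / p) := by rwa [le_log_iff_exp_le ((exp_pos 1).trans_le ha)]
  have hbound := setIntegral_prod_le_logWeightConst_pow (ι := Fin p) (by omega : δ ≤ 2) ha
  rw [Fintype.card_fin, mul_div_cancel₀ _ hp₀.ne'] at hbound
  refine log_le_of_le_mul_pow (setIntegral_nonneg (by measurability) fun t _ ↦ by positivity)
    one_lt_logWeightConst.le ?_ hbound
  exact one_le_mul_of_one_le_of_one_le (by linarith [add_one_le_exp (1 : ℝ)]) (one_le_pow₀ hloga)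
end

section
/- For all integers p ≥ 2 and 1 ≤ K ≤ p/2, the number of functions φ : {1,…,p} → {1,…,p} such that (i) φ(i) ≠ i for all i, (ii) every φ-periodic point i (i.e., φ^m(i) = i for some m ≥ 1) satisfies φ(φ(i)) = i, and (iii) the partition of {1,…,p} into classes of the equivalence relation generated by i ∼ φ(i) has exactly K classes, equals 2 (p−1)! p^{p−2K} / ( 2^K (K−1)! (p−2K)! ). -/
/-!
Let `A` be the set of points lying on a 2-cycle of `φ`. On `A`, `φ` is a fixed-point-free
involution, and every orbit of `φ` falls into `A`, so each class of the equivalence generated by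
`i ∼ φ i` contains exactly one 2-cycle and `#A = 2K`. Conversely `φ` is determined by this
involution, a permutation of cycle type `2^K`, of which there are `p! / ((p - 2K)! 2^K K!)`, and
by its restriction to the complement of `A`, a rooted forest on `p - 2K` vertices with roots in
`A`. By the Cayley-type count `(v - t) v^(t - 1)` for forests on `t` vertices with roots among
the other `v - t` points, there are `2K p^(p - 2K - 1)` such forests.
-/

open Finset Function Relation

section Orbits

variable {α : Type*}

theorem exists_iterate_iff_of_eq {f g : α → α} {p : α → Prop}
    (h : ∀ y, ¬ p y → f y = g y) (x : α) : (∃ n, p (f^[n] x)) ↔ ∃ n, p (g^[n] x) := by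
  suffices key : ∀ f g : α → α, (∀ y, ¬ p y → f y = g y) →
      (∃ n, p (f^[n] x)) → ∃ n, p (g^[n] x) from
    ⟨key f g h, key g f fun y hy => (h y hy).symm⟩
  classical
  intro f g h hf
  have agree : ∀ k ≤ Nat.find hf, f^[k] x = g^[k] x := by
    intro k hk
    induction k with
    | zero => rfl
    | succ k ih =>
      rw [iterate_succ_apply', iterate_succ_apply', ← ih (by omega),
        h _ (Nat.find_min hf (by omega))]
  exact ⟨Nat.find hf, agree _ le_rfl ▸ Nat.find_spec hf⟩

theorem Finite.exists_iterate_periodic [Finite α] (f : α → α) (x : α) :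
    ∃ n m, 1 ≤ m ∧ f^[m] (f^[n] x) = f^[n] x := by
  obtain ⟨a, b, hab, heq⟩ := Finite.exists_ne_map_eq_of_infinite fun n => f^[n] x
  rcases hab.lt_or_gt with h | h
  · exact ⟨a, b - a, by omega, by rw [← iterate_add_apply, Nat.sub_add_cancel h.le]; exact heq.symm⟩
  · exact ⟨b, a - b, by omega, by rw [← iterate_add_apply, Nat.sub_add_cancel h.le]; exact heq⟩

theorem eqvGen_iterate (f : α → α) (x : α) (n : ℕ) : EqvGen (fun i j => f i = j) x (f^[n] x) := by
  induction n with
  | zero => exact EqvGen.refl x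
  | succ n ih => exact ih.trans _ _ _ (EqvGen.rel _ _ (iterate_succ_apply' f n x).symm)

theorem exists_iterate_notMem_sdiff_iff [DecidableEq α] {f : α → α} {T L : Finset α}
    (hf : ∀ x ∈ L, f x ∉ T) (x : α) : (∃ n, f^[n] x ∉ T \ L) ↔ ∃ n, f^[n] x ∉ T := by
  refine ⟨fun ⟨n, hn⟩ => ?_, fun ⟨n, hn⟩ => ⟨n, fun h => hn (mem_sdiff.1 h).1⟩⟩
  by_cases hT : f^[n] x ∈ T
  · exact ⟨n + 1, iterate_succ_apply' f n x ▸ hf _ (by_contra fun h => hn (mem_sdiff.2 ⟨hT, h⟩))⟩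
  · exact ⟨n, hT⟩

end Orbits

theorem sum_range_choose_mul_mul_pow {R : Type*} [CommSemiring R] (n : ℕ) (x y : R) :
    ∑ j ∈ range (n + 1), (n.choose j : R) * j * x ^ j * y ^ (n - j) =
      n * x * (x + y) ^ (n - 1) := by
  cases n with
  | zero => simp
  | succ m =>
    rw [sum_range_succ', add_pow, mul_sum]
    simp only [Nat.cast_zero, mul_zero, zero_mul, add_zero, Nat.add_sub_add_right,
      Nat.add_sub_cancel]
    refine sum_congr rfl fun i _ => ?_
    have h : ((m + 1).choose (i + 1) : R) * ((i + 1 : ℕ) : R) = (m + 1 : ℕ) * m.choose i := by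
      rw [← Nat.cast_mul, ← Nat.cast_mul, Nat.add_one_mul_choose_eq]
    push_cast at h ⊢
    rw [h]
    ring

section EscapingMaps

variable {α : Type*} [DecidableEq α]

theorem card_eq_card_mul_card_of_piecewise (S : Finset α) {X Y Z : Finset (α → α)}
    (hY : ∀ g ∈ Y, ∀ x ∉ S, g x = x) (hZ : ∀ h ∈ Z, ∀ x ∈ S, h x = x)
    (hX : ∀ f, f ∈ X ↔ S.piecewise f id ∈ Y ∧ S.piecewise id f ∈ Z) :
    #X = #Y * #Z := by
  have left : ∀ g ∈ Y, ∀ h, S.piecewise (S.piecewise g h) id = g := fun g hg h => by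
    ext x; by_cases hx : x ∈ S <;> simp [hx, hY g hg]
  have right : ∀ h ∈ Z, ∀ g, S.piecewise id (S.piecewise g h) = h := fun h hh g => by
    ext x; by_cases hx : x ∈ S <;> simp [hx, hZ h hh]
  rw [← card_product]
  refine card_nbij' (fun f => (S.piecewise f id, S.piecewise id f))
    (fun gh => S.piecewise gh.1 gh.2) (fun f hf => mem_product.2 ((hX f).1 hf))
    (fun gh hgh => ?_) (fun f _ => ?_) (fun gh hgh => ?_)
  · obtain ⟨hg, hh⟩ := mem_product.1 hgh
    exact (hX _).2 ⟨(left _ hg _).symm ▸ hg, (right _ hh _).symm ▸ hh⟩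
  · ext x; by_cases hx : x ∈ S <;> simp [hx]
  · obtain ⟨hg, hh⟩ := mem_product.1 hgh
    exact Prod.ext (left _ hg _) (right _ hh _)

variable [Fintype α]

theorem card_filter_eq_self_off_mapsTo (L W : Finset α) :
    #{g : α → α | (∀ x ∉ L, g x = x) ∧ ∀ x ∈ L, g x ∈ W} = #W ^ #L := by
  have : ({g | (∀ x ∉ L, g x = x) ∧ ∀ x ∈ L, g x ∈ W} : Finset (α → α)) =
      Fintype.piFinset fun x => if x ∈ L then W else {x} := by
    ext g
    simp only [mem_filter, mem_univ, true_and, Fintype.mem_piFinset]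
    refine ⟨fun h x => ?_, fun h => ⟨fun x hx => ?_, fun x hx => ?_⟩⟩
    · by_cases hx : x ∈ L <;> simp [hx, h.1, h.2]
    · simpa [hx] using h x
    · simpa [hx] using h x
  rw [this, Fintype.card_piFinset]
  simp only [apply_ite card, card_singleton]
  rw [prod_ite_mem, univ_inter, prod_const]

-- Rooted forests on `T` with roots in `V \ T`: the parent of `x ∈ T` is `f x`.
open Classical in
noncomputable def escapingMaps (T V : Finset α) : Finset (α → α) :=
  {f | (∀ x ∉ T, f x = x) ∧ (∀ x ∈ T, f x ∈ V) ∧ ∀ x, ∃ n, f^[n] x ∉ T}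

theorem mem_escapingMaps {T V : Finset α} {f : α → α} :
    f ∈ escapingMaps T V ↔
      (∀ x ∉ T, f x = x) ∧ (∀ x ∈ T, f x ∈ V) ∧ ∀ x, ∃ n, f^[n] x ∉ T := by
  simp [escapingMaps]

theorem escapingMaps_empty (V : Finset α) : escapingMaps ∅ V = {id} := by
  ext f
  simp only [mem_escapingMaps, notMem_empty, not_false_eq_true, forall_const,
    IsEmpty.forall_iff, implies_true, exists_const, and_true, mem_singleton]
  exact ⟨fun h => funext h, fun h => h ▸ fun _ => rfl⟩

theorem escapingMaps_self {T : Finset α} (hT : T.Nonempty) : escapingMaps T T = ∅ := by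
  refine eq_empty_of_forall_notMem fun f hf => ?_
  obtain ⟨-, hmaps, hesc⟩ := mem_escapingMaps.1 hf
  obtain ⟨x, hx⟩ := hT
  obtain ⟨n, hn⟩ := hesc x
  exact hn (Set.MapsTo.iterate (s := (T : Set α)) hmaps n hx)

theorem mem_filter_exits_iff {T V L : Finset α} (hTV : T ⊆ V) (hL : L ⊆ T) (f : α → α) :
    f ∈ ({f ∈ escapingMaps T V | {x ∈ T | f x ∉ T} = L} : Finset (α → α)) ↔
      L.piecewise f id ∈ ({g | (∀ x ∉ L, g x = x) ∧ ∀ x ∈ L, g x ∈ V \ T} : Finset (α → α)) ∧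
        L.piecewise id f ∈ escapingMaps (T \ L) T := by
  have hesc : ∀ x, (∃ n, (L.piecewise id f)^[n] x ∉ T \ L) ↔ ∃ n, f^[n] x ∉ T \ L :=
    exists_iterate_iff_of_eq (p := (· ∉ T \ L)) fun y hy =>
      piecewise_eq_of_notMem _ _ _ (mem_sdiff.1 (not_not.1 hy)).2
  simp only [mem_filter, mem_univ, true_and, mem_escapingMaps, hesc, Finset.ext_iff]
  constructor
  · rintro ⟨⟨hsupp, hV, hout⟩, hexit⟩
    have hexit' : ∀ x ∈ L, f x ∉ T := fun x hx => ((hexit x).2 hx).2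
    refine ⟨⟨fun x hx => piecewise_eq_of_notMem _ _ _ hx, fun x hx => ?_⟩,
      fun x hx => ?_, fun x hx => ?_, fun x => ?_⟩
    · rw [piecewise_eq_of_mem _ _ _ hx]
      exact mem_sdiff.2 ⟨hV x (hL hx), hexit' x hx⟩
    · by_cases hxL : x ∈ L
      · exact piecewise_eq_of_mem _ _ _ hxL
      · rw [piecewise_eq_of_notMem _ _ _ hxL]
        exact hsupp x fun hxT => hx (mem_sdiff.2 ⟨hxT, hxL⟩)
    · obtain ⟨hxT, hxL⟩ := mem_sdiff.1 hx
      rw [piecewise_eq_of_notMem _ _ _ hxL]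
      by_contra h
      exact hxL ((hexit x).1 ⟨hxT, h⟩)
    · exact (exists_iterate_notMem_sdiff_iff hexit' x).2 (hout x)
  · rintro ⟨⟨-, hLV⟩, hsupp, hT, hout⟩
    have hLV' : ∀ x ∈ L, f x ∈ V \ T := fun x hx => by
      simpa [piecewise_eq_of_mem _ _ _ hx] using hLV x hx
    have hT' : ∀ x ∈ T \ L, f x ∈ T := fun x hx => by
      simpa [piecewise_eq_of_notMem _ _ _ (mem_sdiff.1 hx).2] using hT x hx
    refine ⟨⟨fun x hx => ?_, fun x hx => ?_, fun x => ?_⟩, fun x => ?_⟩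
    · have hxL : x ∉ L := fun h => hx (hL h)
      simpa [piecewise_eq_of_notMem _ _ _ hxL] using
        hsupp x fun h => hx (mem_sdiff.1 h).1
    · by_cases hxL : x ∈ L
      · exact (mem_sdiff.1 (hLV' x hxL)).1
      · exact hTV (hT' x (mem_sdiff.2 ⟨hx, hxL⟩))
    · exact (exists_iterate_notMem_sdiff_iff (fun x hx => (mem_sdiff.1 (hLV' x hx)).2) x).1
        (hout x)
    · refine ⟨fun ⟨hxT, hfx⟩ => by_contra fun hxL => hfx (hT' x (mem_sdiff.2 ⟨hxT, hxL⟩)),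
        fun hxL => ⟨hL hxL, (mem_sdiff.1 (hLV' x hxL)).2⟩⟩

-- Removing the layer `L` of points sent out of `T` leaves a forest on `T \ L` with roots in `L`.
theorem card_filter_exits {T V L : Finset α} (hTV : T ⊆ V) (hL : L ⊆ T) :
    #{f ∈ escapingMaps T V | {x ∈ T | f x ∉ T} = L} =
      #(V \ T) ^ #L * #(escapingMaps (T \ L) T) := by
  rw [← card_filter_eq_self_off_mapsTo L (V \ T)]
  refine card_eq_card_mul_card_of_piecewise L (fun g hg => (mem_filter.1 hg).2.1)
    (fun h hh x hx => (mem_escapingMaps.1 hh).1 x fun h' => (mem_sdiff.1 h').2 hx)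
    (mem_filter_exits_iff hTV hL)

theorem card_escapingMaps_eq_sum {T V : Finset α} (hTV : T ⊆ V) :
    #(escapingMaps T V) = ∑ L ∈ T.powerset, #(V \ T) ^ #L * #(escapingMaps (T \ L) T) := by
  have := card_eq_sum_card_fiberwise (s := escapingMaps T V) (t := T.powerset)
    (f := fun f => {x ∈ T | f x ∉ T}) fun f _ => mem_powerset.2 (filter_subset _ _)
  rw [this]
  exact sum_congr rfl fun L hL => card_filter_exits hTV (mem_powerset.1 hL)

-- Multiplied by `#V` so as to include `T = ∅`; for `T ≠ ∅` it reads `(#V - #T) * #V ^ (#T - 1)`.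
theorem card_escapingMaps_mul {T V : Finset α} (hTV : T ⊆ V) :
    #(escapingMaps T V) * #V = (#V - #T) * #V ^ #T := by
  induction T using Finset.strongInduction generalizing V with
  | H T ih =>
  rcases T.eq_empty_or_nonempty with rfl | hT
  · simp [escapingMaps_empty]
  have hsub : ∀ L ∈ T.powerset, #(escapingMaps (T \ L) T) * #T = #L * #T ^ (#T - #L) := by
    intro L hL
    rw [mem_powerset] at hL
    rcases L.eq_empty_or_nonempty with rfl | hL'
    · simp [escapingMaps_self hT]
    · rw [ih _ (sdiff_ssubset hL hL') sdiff_subset, card_sdiff_of_subset hL,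
        Nat.sub_sub_self (card_le_card hL)]
  have ht : #T ≠ 0 := hT.card_pos.ne'
  have hv : #V - #T + #T = #V := Nat.sub_add_cancel (card_le_card hTV)
  have key : #(escapingMaps T V) * #T = #T * (#V - #T) * (#V - #T + #T) ^ (#T - 1) :=
    calc #(escapingMaps T V) * #T
        = ∑ L ∈ T.powerset, (#V - #T) ^ #L * (#L * #T ^ (#T - #L)) := by
          rw [card_escapingMaps_eq_sum hTV, sum_mul, card_sdiff_of_subset hTV]
          exact sum_congr rfl fun L hL => by rw [mul_assoc, hsub L hL]
      _ = ∑ j ∈ range (#T + 1), (#T).choose j * j * (#V - #T) ^ j * #T ^ (#T - j) := by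
          rw [sum_powerset_apply_card fun j => (#V - #T) ^ j * (j * #T ^ (#T - j))]
          exact sum_congr rfl fun j _ => by rw [smul_eq_mul]; ring
      _ = _ := by simpa using sum_range_choose_mul_mul_pow #T (#V - #T) #T
  rw [mul_comm, mul_assoc, hv] at key
  rw [Nat.eq_of_mul_eq_mul_left (Nat.pos_of_ne_zero ht) key, mul_assoc, pow_sub_one_mul ht]

end EscapingMaps

section TwoCycles

variable {β : Type*}

def IsTwoCycleCore (φ : β → β) (A : Finset β) : Prop :=
  (∀ x ∈ A, φ x ∈ A ∧ φ (φ x) = x ∧ φ x ≠ x) ∧ ∀ x, ∃ n, φ^[n] x ∈ A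

namespace IsTwoCycleCore

variable {φ : β → β} {A : Finset β}

theorem iterate_mem (h : IsTwoCycleCore φ A) {x : β} (hx : x ∈ A) (n : ℕ) : φ^[n] x ∈ A :=
  Set.MapsTo.iterate (s := (A : Set β)) (fun y hy => (h.1 y hy).1) n hx

theorem mem_of_iterate_eq (h : IsTwoCycleCore φ A) {x : β} {m : ℕ} (hm : 1 ≤ m)
    (hx : φ^[m] x = x) : x ∈ A := by
  obtain ⟨n, hn⟩ := h.2 x
  have hmn : φ^[m * n - n + n] x = x := by
    rw [Nat.sub_add_cancel (Nat.le_mul_of_pos_left n hm), iterate_mul, iterate_fixed hx]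
  rw [← hmn, iterate_add_apply]
  exact h.iterate_mem hn _

theorem mem_iff (h : IsTwoCycleCore φ A) {x : β} : x ∈ A ↔ φ (φ x) = x :=
  ⟨fun hx => (h.1 x hx).2.1, h.mem_of_iterate_eq (m := 2) (by norm_num)⟩

theorem apply_ne (h : IsTwoCycleCore φ A) (x : β) : φ x ≠ x := fun hx =>
  (h.1 x (h.mem_of_iterate_eq le_rfl hx)).2.2 hx

theorem edge_iterate (h : IsTwoCycleCore φ A) {a : β} (ha : a ∈ A) (n : ℕ) :
    s(φ^[n] a, φ (φ^[n] a)) = s(a, φ a) := by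
  induction n with
  | zero => rfl
  | succ n ih =>
    rw [iterate_succ_apply', (h.1 _ (h.iterate_mem ha n)).2.1, Sym2.eq_swap, ih]

theorem filter_edge_eq [DecidableEq β] (h : IsTwoCycleCore φ A) {a : β} (ha : a ∈ A) :
    {b ∈ A | s(b, φ b) = s(a, φ a)} = {a, φ a} := by
  ext b
  simp only [mem_filter, Sym2.eq_iff, mem_insert, mem_singleton]
  constructor
  · rintro ⟨-, ⟨rfl, -⟩ | ⟨rfl, -⟩⟩ <;> simp
  · rintro (rfl | rfl)
    · exact ⟨ha, Or.inl ⟨rfl, rfl⟩⟩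
    · exact ⟨(h.1 a ha).1, Or.inr ⟨rfl, (h.1 a ha).2.1⟩⟩

theorem card_eq_two_mul_card_image [DecidableEq β] (h : IsTwoCycleCore φ A) :
    #A = 2 * #(A.image fun a => s(a, φ a)) := by
  rw [card_eq_sum_card_image (fun a => s(a, φ a)) A, mul_comm]
  refine sum_const_nat fun e he => ?_
  obtain ⟨a, ha, rfl⟩ := mem_image.1 he
  rw [h.filter_edge_eq ha, card_pair (h.apply_ne a).symm]

-- Each class is labelled by the 2-cycle `s(a, φ a)` into which the orbits of its points fall.
theorem two_mul_card_classes (h : IsTwoCycleCore φ A) :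
    2 * Nat.card (Quotient (EqvGen.setoid fun i j => φ i = j)) = #A := by
  classical
  choose N hN using h.2
  set c : β → Sym2 β := fun i => s(φ^[N i] i, φ (φ^[N i] i))
  have hc : ∀ i n, φ^[n] i ∈ A → c i = s(φ^[n] i, φ (φ^[n] i)) := by
    intro i n hn
    have e1 := h.edge_iterate (hN i) n
    have e2 := h.edge_iterate hn (N i)
    rw [← iterate_add_apply] at e1 e2
    change s(φ^[N i] i, φ (φ^[N i] i)) = _
    rw [← e1, ← e2, add_comm]
  have hcφ : ∀ i, c (φ i) = c i := fun i => by
    rw [hc i (N (φ i) + 1) (by rw [iterate_succ_apply]; exact hN (φ i)), iterate_succ_apply]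
  have hker : EqvGen.setoid (fun i j => φ i = j) = Setoid.ker c := by
    refine Setoid.ext fun i j => ⟨fun hij => ?_, fun hij => ?_⟩
    · induction hij with
      | rel x y hxy => exact hxy ▸ (hcφ x).symm
      | refl x => rfl
      | symm x y _ ih => exact ih.symm
      | trans x y z _ _ ih₁ ih₂ => exact ih₁.trans ih₂
    · have hj := (eqvGen_iterate φ j (N j)).symm _ _
      rcases Sym2.eq_iff.1 (hij : c i = c j) with ⟨hab, -⟩ | ⟨hab, -⟩
      · exact (eqvGen_iterate φ i (N i)).trans _ _ _ (hab ▸ hj)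
      · have hb := (eqvGen_iterate φ (φ^[N j] j) 1).symm _ _
        exact (eqvGen_iterate φ i (N i)).trans _ _ _ (hab ▸ hb.trans _ _ _ hj)
  have hrange : Set.range c = (A.image fun a => s(a, φ a) : Set (Sym2 β)) := by
    ext e
    simp only [Set.mem_range, coe_image, Set.mem_image, mem_coe]
    refine ⟨fun ⟨i, hi⟩ => ⟨_, hN i, hi⟩, fun ⟨a, ha, hae⟩ => ⟨a, ?_⟩⟩
    rw [hc a 0 ha, ← hae]
    rfl
  rw [hker, Nat.card_congr (Setoid.quotientKerEquivRange c), hrange, Nat.card_coe_set_eq,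
    Set.ncard_coe_finset, h.card_eq_two_mul_card_image]

end IsTwoCycleCore

end TwoCycles

theorem Equiv.Perm.cycleType_eq_replicate_two_iff {α : Type*} [Fintype α] [DecidableEq α]
    {σ : Equiv.Perm α} {K : ℕ} :
    σ.cycleType = Multiset.replicate K 2 ↔ σ ^ 2 = 1 ∧ #σ.support = 2 * K := by
  refine ⟨fun h => ⟨pow_prime_eq_one_iff.2 fun c hc => Multiset.eq_of_mem_replicate (h ▸ hc), ?_⟩,
    fun ⟨h2, hK⟩ => ?_⟩
  · rw [← sum_cycleType, h, Multiset.sum_replicate, smul_eq_mul, mul_comm]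
  · obtain ⟨n, hn⟩ : ∃ n, σ.cycleType = Multiset.replicate n 2 :=
      ⟨_, cycleType_of_pow_prime_eq_one h2⟩
    have hcard : 2 * n = 2 * K := by
      rw [← hK, ← sum_cycleType, hn, Multiset.sum_replicate, smul_eq_mul, mul_comm]
    rwa [← Nat.eq_of_mul_eq_mul_left two_pos hcard]

theorem Equiv.Perm.card_cycleType_eq_replicate_two_mul {α : Type*} [Fintype α] [DecidableEq α]
    {K : ℕ} (hK : 2 * K ≤ Fintype.card α) :
    #{σ : Equiv.Perm α | σ.cycleType = Multiset.replicate K 2} *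
      ((Fintype.card α - 2 * K).factorial * 2 ^ K * K.factorial) =
        (Fintype.card α).factorial := by
  have := card_of_cycleType_mul_eq (α := α) (Multiset.replicate K 2)
  rw [if_pos ⟨by simpa [mul_comm] using hK,
    fun a ha => (Multiset.eq_of_mem_replicate ha).ge⟩] at this
  rcases K.eq_zero_or_pos with rfl | hK0
  · simpa using this
  · simpa [Multiset.toFinset_replicate, hK0.ne', mul_comm K 2] using this

section NearestNeighbor

variable {α : Type*}

def IsNearestNeighborType (K : ℕ) (φ : α → α) : Prop :=
  (∀ i, φ i ≠ i) ∧ (∀ i, (∃ m, 1 ≤ m ∧ φ^[m] i = i) → φ (φ i) = i) ∧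
    Nat.card (Quotient (EqvGen.setoid fun i j => φ i = j)) = K

theorem IsTwoCycleCore.isNearestNeighborType {φ : α → α} {A : Finset α} {K : ℕ}
    (h : IsTwoCycleCore φ A) (hA : #A = 2 * K) : IsNearestNeighborType K φ :=
  ⟨h.apply_ne, fun _ ⟨_, hm, hi⟩ => h.mem_iff.1 (h.mem_of_iterate_eq hm hi),
    by have := h.two_mul_card_classes; omega⟩

variable [DecidableEq α]

def periodicCore (φ : α → α) : α → α := fun x => if φ (φ x) = x then φ x else x

theorem involutive_periodicCore (φ : α → α) : Involutive (periodicCore φ) := by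
  intro x
  by_cases hx : φ (φ x) = x <;> simp [periodicCore, hx]

variable [Fintype α]

theorem IsNearestNeighborType.isTwoCycleCore {φ : α → α} {K : ℕ}
    (h : IsNearestNeighborType K φ) : IsTwoCycleCore φ {x | φ (φ x) = x} := by
  refine ⟨fun x hx => ?_, fun x => ?_⟩
  · rw [mem_filter] at hx ⊢
    exact ⟨⟨mem_univ _, congrArg φ hx.2⟩, hx.2, h.1 x⟩
  · obtain ⟨n, m, hm, hper⟩ := Finite.exists_iterate_periodic φ x
    exact ⟨n, mem_filter.2 ⟨mem_univ _, h.2.1 _ ⟨m, hm, hper⟩⟩⟩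

theorem IsNearestNeighborType.card_filter_apply_apply_eq {φ : α → α} {K : ℕ}
    (h : IsNearestNeighborType K φ) : #{x | φ (φ x) = x} = 2 * K := by
  rw [← h.isTwoCycleCore.two_mul_card_classes, h.2.2]

end NearestNeighbor

section Counting

variable {α : Type*} [Fintype α] [DecidableEq α]

open Equiv

open Classical in
noncomputable def nearestNeighborMaps (K : ℕ) : Finset (α → α) :=
  {φ | IsNearestNeighborType K φ}

theorem mem_nearestNeighborMaps {K : ℕ} {φ : α → α} :
    φ ∈ nearestNeighborMaps K ↔ IsNearestNeighborType K φ := by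
  simp [nearestNeighborMaps]

theorem piecewise_support_eq_iff {σ : Perm α} {φ : α → α} :
    σ.support.piecewise φ id = ⇑σ ↔ ∀ x ∈ σ.support, φ x = σ x := by
  refine ⟨fun h x hx => by rw [← h, piecewise_eq_of_mem _ _ _ hx], fun h => funext fun x => ?_⟩
  by_cases hx : x ∈ σ.support
  · rw [piecewise_eq_of_mem _ _ _ hx, h x hx]
  · rw [piecewise_eq_of_notMem _ _ _ hx, Perm.notMem_support.1 hx, id]

theorem piecewise_id_mem_escapingMaps_compl_iff {A : Finset α} {φ : α → α} :
    A.piecewise id φ ∈ escapingMaps Aᶜ univ ↔ ∀ x, ∃ n, φ^[n] x ∈ A := by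
  simp only [mem_escapingMaps, mem_compl, not_not, mem_univ, implies_true, true_and]
  exact (and_iff_right fun x hx => piecewise_eq_of_mem _ _ _ hx).trans
    (forall_congr' (exists_iterate_iff_of_eq fun y hy => piecewise_eq_of_notMem _ _ _ hy))

theorem isTwoCycleCore_support_iff {σ : Perm α} (hσ : σ ^ 2 = 1) {φ : α → α}
    (hφ : ∀ x ∈ σ.support, φ x = σ x) :
    IsTwoCycleCore φ σ.support ↔ ∀ x, ∃ n, φ^[n] x ∈ σ.support := by
  refine ⟨And.right, fun h => ⟨fun x hx => ?_, h⟩⟩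
  rw [hφ x hx, hφ _ (Perm.apply_mem_support.2 hx), ← Perm.mul_apply, ← pow_two, hσ]
  exact ⟨Perm.apply_mem_support.2 hx, rfl, Perm.mem_support.1 hx⟩

theorem isNearestNeighborType_and_periodicCore_eq_iff {K : ℕ} {σ : Perm α}
    (hσ : σ.cycleType = Multiset.replicate K 2) (φ : α → α) :
    IsNearestNeighborType K φ ∧ periodicCore φ = σ ↔
      σ.support.piecewise φ id = σ ∧ σ.support.piecewise id φ ∈ escapingMaps σ.supportᶜ univ := by
  obtain ⟨hσ2, hK⟩ := Perm.cycleType_eq_replicate_two_iff.1 hσ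
  rw [piecewise_support_eq_iff, piecewise_id_mem_escapingMaps_compl_iff]
  constructor
  · rintro ⟨h, hcore⟩
    have hA : ({x | φ (φ x) = x} : Finset α) = σ.support := by
      ext x
      rw [mem_filter, Perm.mem_support, ← hcore]
      by_cases hx : φ (φ x) = x <;> simp [periodicCore, hx, h.1 x]
    have hc := h.isTwoCycleCore
    rw [hA] at hc
    refine ⟨fun x hx => ?_, hc.2⟩
    rw [← hcore]
    simp [periodicCore, hc.mem_iff.1 hx]
  · rintro ⟨hφ, hreach⟩
    have hc := (isTwoCycleCore_support_iff hσ2 hφ).2 hreach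
    refine ⟨hc.isNearestNeighborType hK, funext fun x => ?_⟩
    by_cases hx : x ∈ σ.support
    · simp only [periodicCore]
      rw [if_pos (hc.mem_iff.1 hx), hφ x hx]
    · simp only [periodicCore]
      rw [if_neg (mt hc.mem_iff.2 hx), Perm.notMem_support.1 hx]

theorem card_filter_periodicCore_eq {K : ℕ} {σ : Perm α}
    (hσ : σ.cycleType = Multiset.replicate K 2) :
    #{φ ∈ nearestNeighborMaps K | periodicCore φ = σ} = #(escapingMaps σ.supportᶜ univ) := by
  rw [← one_mul #(escapingMaps _ _), ← card_singleton (σ : α → α)]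
  refine card_eq_card_mul_card_of_piecewise σ.support
    (fun g hg x hx => by rw [mem_singleton.1 hg]; exact Perm.notMem_support.1 hx)
    (fun h hh x hx => (mem_escapingMaps.1 hh).1 x (by simpa using hx)) fun φ => ?_
  rw [mem_filter, mem_nearestNeighborMaps, mem_singleton]
  exact isNearestNeighborType_and_periodicCore_eq_iff hσ φ

theorem periodicCore_mem_map {K : ℕ} {φ : α → α} (h : IsNearestNeighborType K φ) :
    periodicCore φ ∈ ({σ : Perm α | σ.cycleType = Multiset.replicate K 2} : Finset _).map
      ⟨fun σ : Perm α => (σ : α → α), Equiv.coe_fn_injective⟩ := by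
  refine mem_map.2 ⟨(involutive_periodicCore φ).toPerm, mem_filter.2 ⟨mem_univ _, ?_⟩, rfl⟩
  rw [Perm.cycleType_eq_replicate_two_iff, ← h.card_filter_apply_apply_eq]
  refine ⟨Perm.ext fun x => involutive_periodicCore φ x, congrArg card (ext fun x => ?_)⟩
  by_cases hx : φ (φ x) = x <;> simp [periodicCore, hx, h.1 x]

theorem card_nearestNeighborMaps_mul (K : ℕ) :
    #(nearestNeighborMaps (α := α) K) * Fintype.card α =
      #{σ : Perm α | σ.cycleType = Multiset.replicate K 2} *
        (2 * K * Fintype.card α ^ (Fintype.card α - 2 * K)) := by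
  rw [card_eq_sum_card_fiberwise fun φ hφ =>
    periodicCore_mem_map (mem_nearestNeighborMaps.1 hφ), sum_map, sum_mul, ← smul_eq_mul,
    ← sum_const]
  simp only [Function.Embedding.coeFn_mk]
  refine sum_congr rfl fun σ hσ => ?_
  have hσ := (mem_filter.1 hσ).2
  have hK := (Perm.cycleType_eq_replicate_two_iff.1 hσ).2
  have hle : #σ.support ≤ Fintype.card α := card_le_univ _
  rw [card_filter_periodicCore_eq hσ, ← card_univ, card_escapingMaps_mul (subset_univ _),
    card_compl, card_univ, hK, Nat.sub_sub_self (hK ▸ hle)]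

theorem card_nearestNeighborMaps_mul_factorial {K : ℕ} (hK : K ≠ 0)
    (hKα : 2 * K ≤ Fintype.card α) :
    #(nearestNeighborMaps (α := α) K) *
        (2 ^ K * (K - 1).factorial * (Fintype.card α - 2 * K).factorial) =
      2 * (Fintype.card α - 1).factorial * Fintype.card α ^ (Fintype.card α - 2 * K) := by
  have hmaps := card_nearestNeighborMaps_mul (α := α) K
  have hperms := Perm.card_cycleType_eq_replicate_two_mul (α := α) hKα
  set n := Fintype.card α
  set N := #(nearestNeighborMaps (α := α) K)
  apply Nat.eq_of_mul_eq_mul_left (show 0 < n * K from Nat.mul_pos (by omega) (by omega))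
  calc n * K * (N * (2 ^ K * (K - 1).factorial * (n - 2 * K).factorial))
      = N * n * ((n - 2 * K).factorial * 2 ^ K * (K * (K - 1).factorial)) := by ring
    _ = #{σ : Perm α | σ.cycleType = Multiset.replicate K 2} *
          ((n - 2 * K).factorial * 2 ^ K * K.factorial) * (2 * K * n ^ (n - 2 * K)) := by
        rw [hmaps, Nat.mul_factorial_pred hK]
        ring
    _ = n * (n - 1).factorial * (2 * K * n ^ (n - 2 * K)) := by
        rw [hperms, Nat.mul_factorial_pred (by omega)]
    _ = n * K * (2 * (n - 1).factorial * n ^ (n - 2 * K)) := by ring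

end Counting

theorem statement14_general (p K : ℕ) (hK1 : 1 ≤ K) (hK2 : 2 * K ≤ p) :
    (Nat.card {φ : (Fin p → Fin p) //
        (∀ i, φ i ≠ i) ∧
        (∀ i, (∃ m, 1 ≤ m ∧ φ^[m] i = i) → φ (φ i) = i) ∧
        Nat.card (Quotient (EqvGen.setoid (fun i j => φ i = j))) = K} : ℝ) =
      2 * (Nat.factorial (p - 1) : ℝ) * (p : ℝ) ^ (p - 2 * K) /
        (2 ^ K * (Nat.factorial (K - 1) : ℝ) * (Nat.factorial (p - 2 * K) : ℝ)) := by
  change ((Nat.card {φ : Fin p → Fin p // IsNearestNeighborType K φ} : ℕ) : ℝ) = _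
  rw [← Nat.card_congr (Equiv.subtypeEquivRight fun φ => mem_nearestNeighborMaps),
    Nat.card_eq_finsetCard, eq_div_iff (by positivity)]
  have h := card_nearestNeighborMaps_mul_factorial (α := Fin p) (K := K) (by omega)
    (by rwa [Fintype.card_fin])
  rw [Fintype.card_fin] at h
  exact_mod_cast h

/-- The number of nearest-neighbor-type functional digraphs on `{1, …, p}` with `K`
connected components (equation (3.9)). -/
theorem statement14 (p K : ℕ) (hp : 2 ≤ p) (hK1 : 1 ≤ K) (hK2 : 2 * K ≤ p) :
    (Nat.card {φ : (Fin p → Fin p) //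
        (∀ i, φ i ≠ i) ∧
        (∀ i, (∃ m, 1 ≤ m ∧ φ^[m] i = i) → φ (φ i) = i) ∧
        Nat.card (Quotient (EqvGen.setoid (fun i j => φ i = j))) = K} : ℝ) =
      2 * (Nat.factorial (p - 1) : ℝ) * (p : ℝ) ^ (p - 2 * K) /
        (2 ^ K * (Nat.factorial (K - 1) : ℝ) * (Nat.factorial (p - 2 * K) : ℝ)) :=
  statement14_general p K hK1 hK2
end
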